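/- For every Boolean function f: {0,1}^n → {0,1} and M ∈ {bs, C} with M(f) > 0, there exists a restriction ρ with |ρ^{-1}(*)| = O(M(f)) such that M(f|_ρ) = Ω(√(M(f))). -/
import Mathlib


open Finset

section Core
variable {ι : Type} [Fintype ι] [DecidableEq ι]

/-- Flip the bits of `x` indexed by the block `B`. -/
def flipSet (x : ι → Bool) (B : Finset ι) : ι → Bool :=
  fun i => if i ∈ B then !(x i) else x i

/-- Sensitivity of `f` at input `x`. -/
def sensAt (f : (ι → Bool) → Bool) (x : ι → Bool) : ℕ :=
  (univ.filter fun i => f (flipSet x {i}) ≠ f x).card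

/-- Sensitivity of `f`. -/
def sens (f : (ι → Bool) → Bool) : ℕ :=
  univ.sup fun x => sensAt f x

/-- Block sensitivity of `f` at `x`: the maximal number of pairwise disjoint
sensitive blocks at `x`. -/
noncomputable def bsAt (f : (ι → Bool) → Bool) (x : ι → Bool) : ℕ :=
  sSup {r | ∃ B : Fin r → Finset ι,
    (∀ j, f (flipSet x (B j)) ≠ f x) ∧
    ∀ j₁ j₂, j₁ ≠ j₂ → Disjoint (B j₁) (B j₂)}

/-- Block sensitivity of `f`. -/
noncomputable def blockSens (f : (ι → Bool) → Bool) : ℕ :=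
  univ.sup fun x => bsAt f x

/-- `S` is a certificate for `f` at `x`: every input agreeing with `x` on `S`
 has the same `f`-value as `x`. -/
def IsCert (f : (ι → Bool) → Bool) (x : ι → Bool) (S : Finset ι) : Prop :=
  ∀ y : ι → Bool, (∀ i ∈ S, y i = x i) → f y = f x

/-- Certificate complexity of `f` at `x`. -/
noncomputable def certAt (f : (ι → Bool) → Bool) (x : ι → Bool) : ℕ :=
  sInf {c | ∃ S : Finset ι, S.card = c ∧ IsCert f x S}

/-- Certificate complexity of `f`. -/
noncomputable def certC (f : (ι → Bool) → Bool) : ℕ :=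
  univ.sup fun x => certAt f x

/-- 0-certificate complexity of `f`. -/
noncomputable def cert0 (f : (ι → Bool) → Bool) : ℕ :=
  (univ.filter fun x => f x = false).sup fun x => certAt f x

/-- 1-certificate complexity of `f`. -/
noncomputable def cert1 (f : (ι → Bool) → Bool) : ℕ :=
  (univ.filter fun x => f x = true).sup fun x => certAt f x

/-- The restriction of `f` by the partial assignment `ρ` (a variable `i` with
`ρ i = none` is left unset; otherwise it is fixed to the given value). The
restricted function depends only on the unset variables. -/
def restrictBF (f : (ι → Bool) → Bool) (ρ : ι → Option Bool) : (ι → Bool) → Bool :=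
  fun x => f fun i => (ρ i).getD (x i)

/-- Number of unset variables of a partial assignment. -/
def unsetCard (ρ : ι → Option Bool) : ℕ :=
  (univ.filter fun i => ρ i = none).card

end Core

set_option linter.unusedSectionVars false
section Aux
variable {ι : Type} [Fintype ι] [DecidableEq ι]

lemma flipSet_empty (x : ι → Bool) : flipSet x ∅ = x := by
  funext i; simp [flipSet]

/-- The defining set of `bsAt`. -/
def bsSet (f : (ι → Bool) → Bool) (x : ι → Bool) : Set ℕ :=
  {r | ∃ B : Fin r → Finset ι,
    (∀ j, f (flipSet x (B j)) ≠ f x) ∧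
    ∀ j₁ j₂, j₁ ≠ j₂ → Disjoint (B j₁) (B j₂)}

lemma bsAt_eq_sSup (f : (ι → Bool) → Bool) (x : ι → Bool) :
    bsAt f x = sSup (bsSet f x) := rfl

lemma bsSet_zero_mem (f : (ι → Bool) → Bool) (x : ι → Bool) : 0 ∈ bsSet f x :=
  ⟨Fin.elim0, fun j => j.elim0, fun j => j.elim0⟩

lemma bsSet_mem_le_card (f : (ι → Bool) → Bool) (x : ι → Bool) {r : ℕ}
    (hr : r ∈ bsSet f x) : r ≤ Fintype.card ι := by
  obtain ⟨B, hB, hdisj⟩ := hr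
  have hne : ∀ j, (B j).Nonempty := by
    intro j
    rcases (B j).eq_empty_or_nonempty with h | h
    · exact absurd (by rw [h, flipSet_empty]) (hB j)
    · exact h
  choose g hg using hne
  have hinj : Function.Injective g := by
    intro j₁ j₂ h
    by_contra hne'
    exact Finset.disjoint_left.mp (hdisj j₁ j₂ hne') (hg j₁) (h ▸ hg j₂)
  simpa using Fintype.card_le_of_injective g hinj

lemma bsSet_bddAbove (f : (ι → Bool) → Bool) (x : ι → Bool) : BddAbove (bsSet f x) :=
  ⟨Fintype.card ι, fun _ hr => bsSet_mem_le_card f x hr⟩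

lemma le_bsAt_of_mem (f : (ι → Bool) → Bool) (x : ι → Bool) {r : ℕ}
    (hr : r ∈ bsSet f x) : r ≤ bsAt f x :=
  le_csSup (bsSet_bddAbove f x) hr

lemma bsAt_mem (f : (ι → Bool) → Bool) (x : ι → Bool) : bsAt f x ∈ bsSet f x :=
  Nat.sSup_mem ⟨0, bsSet_zero_mem f x⟩ (bsSet_bddAbove f x)

lemma sensAt_le_bsAt (f : (ι → Bool) → Bool) (x : ι → Bool) :
    sensAt f x ≤ bsAt f x := by
  classical
  set s := univ.filter fun i => f (flipSet x {i}) ≠ f x with hs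
  have e := s.equivFin.symm
  refine le_bsAt_of_mem f x ⟨fun j => {(e j : ι)}, ?_, ?_⟩
  · intro j
    exact (Finset.mem_filter.mp (e j).2).2
  · intro j₁ j₂ hne
    simp only [Finset.disjoint_singleton]
    intro h
    exact hne (e.injective (Subtype.ext h))

lemma exists_minimal_block (f : (ι → Bool) → Bool) (x : ι → Bool) {B : Finset ι}
    (hB : f (flipSet x B) ≠ f x) :
    ∃ B' : Finset ι, B' ⊆ B ∧ f (flipSet x B') ≠ f x ∧ B'.card ≤ sens f := by
  classical
  set S : Finset (Finset ι) := B.powerset.filter (fun C => f (flipSet x C) ≠ f x) with hS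
  have hBS : B ∈ S := by simp [hS, hB]
  obtain ⟨C, hCS, hmin⟩ := S.exists_min_image Finset.card ⟨B, hBS⟩
  rw [hS, Finset.mem_filter, Finset.mem_powerset] at hCS
  refine ⟨C, hCS.1, hCS.2, ?_⟩
  have key : ∀ i ∈ C, f (flipSet (flipSet x C) {i}) ≠ f (flipSet x C) := by
    intro i hi
    have h1 : flipSet (flipSet x C) {i} = flipSet x (C.erase i) := by
      funext j
      by_cases hji : j = i
      · subst hji; simp [flipSet, hi]
      · by_cases hjC : j ∈ C <;> simp [flipSet, hji, hjC]
    rw [h1]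
    have h2 : f (flipSet x (C.erase i)) = f x := by
      by_contra hne
      have hmem : C.erase i ∈ S := by
        rw [hS, Finset.mem_filter, Finset.mem_powerset]
        exact ⟨(Finset.erase_subset _ _).trans hCS.1, hne⟩
      have h3 := hmin _ hmem
      have hlt := Finset.card_erase_lt_of_mem hi
      omega
    rw [h2]
    exact fun h => hCS.2 h.symm
  have hsub : C ⊆ univ.filter fun i => f (flipSet (flipSet x C) {i}) ≠ f (flipSet x C) := by
    intro i hi
    simp only [Finset.mem_filter, Finset.mem_univ, true_and]
    exact key i hi
  calc C.card ≤ sensAt f (flipSet x C) := Finset.card_le_card hsub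
    _ ≤ sens f := Finset.le_sup (Finset.mem_univ _)

lemma certAt_witness (f : (ι → Bool) → Bool) (x : ι → Bool) :
    ∃ S : Finset ι, S.card = certAt f x ∧ IsCert f x S := by
  have hne : {c | ∃ S : Finset ι, S.card = c ∧ IsCert f x S}.Nonempty := by
    refine ⟨(univ : Finset ι).card, univ, rfl, fun y hy => ?_⟩
    have : y = x := funext fun i => hy i (Finset.mem_univ i)
    rw [this]
  exact Nat.sInf_mem hne

lemma certAt_le_of_cert (f : (ι → Bool) → Bool) (x : ι → Bool) {S : Finset ι}
    (h : IsCert f x S) : certAt f x ≤ S.card :=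
  Nat.sInf_le ⟨S, rfl, h⟩

lemma bsAt_le_certAt (f : (ι → Bool) → Bool) (x : ι → Bool) :
    bsAt f x ≤ certAt f x := by
  obtain ⟨S, hScard, hScert⟩ := certAt_witness f x
  obtain ⟨B, hB, hdisj⟩ := bsAt_mem f x
  have hint : ∀ j, ∃ i, i ∈ (B j) ∩ S := by
    intro j
    by_contra hcon
    push_neg at hcon
    apply hB j
    apply hScert
    intro i hi
    have hiB : i ∉ B j := fun h => hcon i (Finset.mem_inter.mpr ⟨h, hi⟩)
    simp [flipSet, hiB]
  choose g hg using hint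
  have hinj : Function.Injective g := by
    intro j₁ j₂ h
    by_contra hne'
    exact Finset.disjoint_left.mp (hdisj j₁ j₂ hne')
      (Finset.mem_of_mem_inter_left (hg j₁))
      (h ▸ Finset.mem_of_mem_inter_left (hg j₂))
  have : bsAt f x ≤ S.card := by
    have := Fintype.card_le_of_injective (fun j => (⟨g j, Finset.mem_of_mem_inter_right (hg j)⟩ : S))
      (fun j₁ j₂ h => hinj (by simpa using congrArg Subtype.val h))
    simpa using this
  omega

end Aux
section Aux2
set_option linter.unusedSectionVars false
variable {ι : Type} [Fintype ι] [DecidableEq ι]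

lemma certAt_le_bsAt_mul_sens (f : (ι → Bool) → Bool) (x : ι → Bool) :
    certAt f x ≤ bsAt f x * sens f := by
  classical
  set T : Set ℕ := {r | ∃ B : Fin r → Finset ι,
      (∀ j, f (flipSet x (B j)) ≠ f x ∧ (B j).card ≤ sens f) ∧
      (∀ j₁ j₂, j₁ ≠ j₂ → Disjoint (B j₁) (B j₂))} with hT
  have hTsub : T ⊆ bsSet f x := by
    rintro r ⟨B, hB, hdisj⟩
    exact ⟨B, fun j => (hB j).1, hdisj⟩
  have hT0 : 0 ∈ T := ⟨Fin.elim0, fun j => j.elim0, fun j => j.elim0⟩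
  have hTbdd : BddAbove T :=
    ⟨Fintype.card ι, fun r hr => bsSet_mem_le_card f x (hTsub hr)⟩
  set r := sSup T with hr
  obtain ⟨B, hB, hdisj⟩ : r ∈ T := Nat.sSup_mem ⟨0, hT0⟩ hTbdd
  set S := (univ : Finset (Fin r)).biUnion B with hSdef
  have hcert : IsCert f x S := by
    intro y hy
    by_contra hne
    set D := univ.filter (fun i => y i ≠ x i) with hD
    have hyD : y = flipSet x D := by
      funext i
      by_cases h : y i = x i
      · simp [flipSet, hD, h]
      · have : y i = !(x i) := by
          cases hx : x i <;> cases hy' : y i <;> simp_all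
        simp [flipSet, hD, h, this]
    have hDsens : f (flipSet x D) ≠ f x := by rw [← hyD]; exact hne
    obtain ⟨D', hD'sub, hD'sens, hD'card⟩ := exists_minimal_block f x hDsens
    have hDS : ∀ i ∈ D, i ∉ S := by
      intro i hiD hiS
      rw [hD, Finset.mem_filter] at hiD
      exact hiD.2 (hy i hiS)
    -- extend the family
    have hmem : r + 1 ∈ T := by
      refine ⟨Fin.snoc B D', ?_, ?_⟩
      · intro j
        refine Fin.lastCases ?_ ?_ j
        · simpa [Fin.snoc_last] using And.intro hD'sens hD'card
        · intro j'
          simpa [Fin.snoc_castSucc] using hB j'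
      · have key : ∀ k : Fin r, Disjoint D' (B k) := fun k =>
          Finset.disjoint_left.mpr fun i hi hiB =>
            hDS i (hD'sub hi) (Finset.mem_biUnion.mpr ⟨k, Finset.mem_univ _, hiB⟩)
        intro j₁ j₂
        refine Fin.lastCases ?_ (fun k₁ => ?_) j₁ <;>
          refine Fin.lastCases ?_ (fun k₂ => ?_) j₂ <;> intro hne'
        · exact absurd rfl hne'
        · simp only [Fin.snoc_last, Fin.snoc_castSucc]
          exact key k₂
        · simp only [Fin.snoc_last, Fin.snoc_castSucc]
          exact (key k₁).symm
        · simp only [Fin.snoc_castSucc]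
          exact hdisj k₁ k₂ (fun h => hne' (congrArg Fin.castSucc h))
    have := le_csSup hTbdd hmem
    omega
  have hle1 : certAt f x ≤ S.card := certAt_le_of_cert f x hcert
  have hle2 : S.card ≤ r * sens f := by
    calc S.card ≤ ∑ j : Fin r, (B j).card := Finset.card_biUnion_le
      _ ≤ ∑ _j : Fin r, sens f := Finset.sum_le_sum fun j _ => (hB j).2
      _ = r * sens f := by simp [Finset.sum_const, mul_comm]
  have hle3 : r ≤ bsAt f x := le_bsAt_of_mem f x (hTsub (Nat.sSup_mem ⟨0, hT0⟩ hTbdd))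
  calc certAt f x ≤ r * sens f := hle1.trans hle2
    _ ≤ bsAt f x * sens f := Nat.mul_le_mul_right _ hle3

/-- Restriction fixing everything outside `U` according to `x`. -/
def rhoOf (x : ι → Bool) (U : Finset ι) : ι → Option Bool :=
  fun i => if i ∈ U then none else some (x i)

lemma unsetCard_rhoOf (x : ι → Bool) (U : Finset ι) :
    unsetCard (rhoOf x U) = U.card := by
  unfold unsetCard rhoOf
  congr 1
  ext i
  by_cases h : i ∈ U <;> simp [h]

lemma restrict_rhoOf_flip (f : (ι → Bool) → Bool) (x : ι → Bool) (U B : Finset ι)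
    (hB : B ⊆ U) :
    restrictBF f (rhoOf x U) (flipSet x B) = f (flipSet x B) := by
  unfold restrictBF rhoOf
  congr 1
  funext i
  by_cases hU : i ∈ U
  · simp [hU]
  · have hiB : i ∉ B := fun h => hU (hB h)
    simp [hU, flipSet, hiB]

lemma restrict_rhoOf_self (f : (ι → Bool) → Bool) (x : ι → Bool) (U : Finset ι) :
    restrictBF f (rhoOf x U) x = f x := by
  have h := restrict_rhoOf_flip f x U ∅ (Finset.empty_subset _)
  rwa [flipSet_empty] at h

lemma sens_le_blockSens (f : (ι → Bool) → Bool) : sens f ≤ blockSens f :=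
  Finset.sup_mono_fun fun x _ => sensAt_le_bsAt f x

lemma blockSens_le_certC (f : (ι → Bool) → Bool) : blockSens f ≤ certC f :=
  Finset.sup_mono_fun fun x _ => bsAt_le_certAt f x

lemma certC_le_blockSens_mul_sens (f : (ι → Bool) → Bool) :
    certC f ≤ blockSens f * sens f :=
  Finset.sup_le fun x _ => (certAt_le_bsAt_mul_sens f x).trans
    (Nat.mul_le_mul_right _ (Finset.le_sup (Finset.mem_univ x)))

/-- Sensitivity condensation. -/
lemma sens_condensation (f : (ι → Bool) → Bool) :
    ∃ ρ : ι → Option Bool, unsetCard ρ = sens f ∧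
      sens f ≤ blockSens (restrictBF f ρ) ∧ sens f ≤ certC (restrictBF f ρ) := by
  classical
  obtain ⟨x₀, -, hx₀⟩ := Finset.exists_mem_eq_sup (univ : Finset (ι → Bool))
    Finset.univ_nonempty (fun x => sensAt f x)
  set U := univ.filter fun i => f (flipSet x₀ {i}) ≠ f x₀ with hU
  refine ⟨rhoOf x₀ U, ?_, ?_⟩
  · rw [unsetCard_rhoOf]; exact hx₀.symm
  set g := restrictBF f (rhoOf x₀ U) with hg
  have hxs : sens f = sensAt f x₀ := hx₀
  have hsens : sens f ≤ sensAt g x₀ := by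
    rw [hxs]
    apply Finset.card_le_card
    intro i hi
    have hiU : i ∈ U := hi
    rw [Finset.mem_filter] at hi
    rw [Finset.mem_filter]
    refine ⟨Finset.mem_univ _, ?_⟩
    have h1 : g (flipSet x₀ {i}) = f (flipSet x₀ {i}) :=
      restrict_rhoOf_flip f x₀ U {i} (Finset.singleton_subset_iff.mpr hiU)
    have h2 : g x₀ = f x₀ := restrict_rhoOf_self f x₀ U
    rw [h1, h2]
    exact hi.2
  have h3 : sensAt g x₀ ≤ bsAt g x₀ := sensAt_le_bsAt g x₀
  have h4 : bsAt g x₀ ≤ blockSens g := Finset.le_sup (Finset.mem_univ _)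
  have h5 : bsAt g x₀ ≤ certAt g x₀ := bsAt_le_certAt g x₀
  have h6 : certAt g x₀ ≤ certC g := Finset.le_sup (Finset.mem_univ _)
  omega

/-- Block condensation: keep `k` disjoint minimal sensitive blocks. -/
lemma block_condensation (f : (ι → Bool) → Bool) {k : ℕ} (hk : k ≤ blockSens f) :
    ∃ ρ : ι → Option Bool, unsetCard ρ ≤ k * sens f ∧
      k ≤ blockSens (restrictBF f ρ) ∧ k ≤ certC (restrictBF f ρ) := by
  classical
  obtain ⟨x₀, -, hx₀⟩ := Finset.exists_mem_eq_sup (univ : Finset (ι → Bool))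
    Finset.univ_nonempty (fun x => bsAt f x)
  obtain ⟨B, hB, hdisj⟩ := bsAt_mem f x₀
  have hxb : blockSens f = bsAt f x₀ := hx₀
  have hkb : k ≤ bsAt f x₀ := hxb ▸ hk
  have hmin : ∀ j : Fin k, ∃ B' : Finset ι, B' ⊆ B (Fin.castLE hkb j) ∧
      f (flipSet x₀ B') ≠ f x₀ ∧ B'.card ≤ sens f :=
    fun j => exists_minimal_block f x₀ (hB (Fin.castLE hkb j))
  choose Bm hBm1 hBm2 hBm3 using hmin
  set U := (univ : Finset (Fin k)).biUnion Bm with hU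
  have hBmU : ∀ j, Bm j ⊆ U := fun j => Finset.subset_biUnion_of_mem Bm (Finset.mem_univ j)
  refine ⟨rhoOf x₀ U, ?_, ?_⟩
  · rw [unsetCard_rhoOf]
    calc U.card ≤ ∑ j : Fin k, (Bm j).card := Finset.card_biUnion_le
      _ ≤ ∑ _j : Fin k, sens f := Finset.sum_le_sum fun j _ => hBm3 j
      _ = k * sens f := by simp [Finset.sum_const, mul_comm]
  set g := restrictBF f (rhoOf x₀ U) with hg
  have hmem : k ∈ bsSet g x₀ := by
    refine ⟨Bm, ?_, ?_⟩
    · intro j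
      have h1 : g (flipSet x₀ (Bm j)) = f (flipSet x₀ (Bm j)) :=
        restrict_rhoOf_flip f x₀ U (Bm j) (hBmU j)
      have h2 : g x₀ = f x₀ := restrict_rhoOf_self f x₀ U
      rw [h1, h2]
      exact hBm2 j
    · intro j₁ j₂ hne
      have : Fin.castLE hkb j₁ ≠ Fin.castLE hkb j₂ :=
        fun h => hne (Fin.castLE_injective hkb h)
      exact (hdisj _ _ this).mono (hBm1 j₁) (hBm1 j₂)
  have h1 : k ≤ bsAt g x₀ := le_bsAt_of_mem g x₀ hmem
  have h2 : bsAt g x₀ ≤ blockSens g := Finset.le_sup (Finset.mem_univ _)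
  have h3 : bsAt g x₀ ≤ certAt g x₀ := bsAt_le_certAt g x₀
  have h4 : certAt g x₀ ≤ certC g := Finset.le_sup (Finset.mem_univ _)
  omega

end Aux2
lemma sqrt_le_succ_nat_sqrt (M : ℕ) : Real.sqrt M ≤ ((Nat.sqrt M + 1 : ℕ) : ℝ) := by
  have h1 : M < (Nat.sqrt M + 1) ^ 2 := Nat.lt_succ_sqrt' M
  have h2 : (M : ℝ) ≤ ((Nat.sqrt M + 1 : ℕ) : ℝ) * ((Nat.sqrt M + 1 : ℕ) : ℝ) := by
    rw [pow_two] at h1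
    exact_mod_cast h1.le
  calc Real.sqrt M ≤ Real.sqrt (((Nat.sqrt M + 1 : ℕ) : ℝ) * ((Nat.sqrt M + 1 : ℕ) : ℝ)) :=
        Real.sqrt_le_sqrt h2
    _ = _ := Real.sqrt_mul_self (by positivity)

lemma sqrt_le_of_nat_le_sq {a : ℝ} {M : ℕ} (ha : 0 ≤ a) (h : (M : ℝ) ≤ a * a) :
    Real.sqrt M ≤ a := by
  calc Real.sqrt M ≤ Real.sqrt (a * a) := Real.sqrt_le_sqrt h
    _ = a := Real.sqrt_mul_self ha

/-- for `M ∈ {bs, C}` with `M(f) > 0`, there is a restriction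
with `O(M(f))` unset variables and `M(f|_ρ) = Ω(√(M(f)))`. -/
theorem bs_cert_lossy_condensation :
    ∃ c₁ c₂ : ℝ, 0 < c₁ ∧ 0 < c₂ ∧
      ∀ (n : ℕ) (f : (Fin n → Bool) → Bool),
        (0 < blockSens f →
          ∃ ρ : Fin n → Option Bool,
            (unsetCard ρ : ℝ) ≤ c₁ * (blockSens f : ℝ) ∧
            c₂ * Real.sqrt (blockSens f) ≤ (blockSens (restrictBF f ρ) : ℝ)) ∧
        (0 < certC f →
          ∃ ρ : Fin n → Option Bool,
            (unsetCard ρ : ℝ) ≤ c₁ * (certC f : ℝ) ∧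
            c₂ * Real.sqrt (certC f) ≤ (certC (restrictBF f ρ) : ℝ)) := by
  refine ⟨2, 1, by norm_num, by norm_num, fun n f => ⟨?_, ?_⟩⟩
  · -- block sensitivity part
    intro hb
    by_cases hcase : blockSens f ≤ sens f * sens f
    · obtain ⟨ρ, hρ1, hρ2, -⟩ := sens_condensation f
      refine ⟨ρ, ?_, ?_⟩
      · rw [hρ1]
        have h : (sens f : ℝ) ≤ (blockSens f : ℝ) := by
          exact_mod_cast sens_le_blockSens f
        have hb' : (0:ℝ) ≤ (blockSens f : ℝ) := by positivity
        linarith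
      · rw [one_mul]
        have h1 : Real.sqrt (blockSens f) ≤ (sens f : ℝ) :=
          sqrt_le_of_nat_le_sq (by positivity) (by exact_mod_cast hcase)
        have h2 : (sens f : ℝ) ≤ (blockSens (restrictBF f ρ) : ℝ) := by exact_mod_cast hρ2
        linarith
    · push_neg at hcase
      obtain ⟨ρ, hρ1, hρ2, -⟩ := block_condensation f
        (min_le_right (Nat.sqrt (blockSens f) + 1) (blockSens f))
      refine ⟨ρ, ?_, ?_⟩
      · have hs_le : sens f ≤ Nat.sqrt (blockSens f) :=
          Nat.le_sqrt'.mpr (by rw [pow_two]; exact hcase.le)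
        have hq1 : Nat.sqrt (blockSens f) * Nat.sqrt (blockSens f) ≤ blockSens f := by
          have h := Nat.sqrt_le' (blockSens f); rwa [pow_two] at h
        have hq2 : Nat.sqrt (blockSens f) ≤ blockSens f := Nat.sqrt_le_self (blockSens f)
        have hnat : unsetCard ρ ≤ 2 * blockSens f := by
          have h3 : min (Nat.sqrt (blockSens f) + 1) (blockSens f) * sens f ≤
              (Nat.sqrt (blockSens f) + 1) * Nat.sqrt (blockSens f) :=
            Nat.mul_le_mul (min_le_left _ _) hs_le
          nlinarith [hρ1]
        calc (unsetCard ρ : ℝ) ≤ ((2 * blockSens f : ℕ) : ℝ) := by exact_mod_cast hnat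
          _ = 2 * (blockSens f : ℝ) := by push_cast; ring
      · rw [one_mul]
        have e1 : Real.sqrt (blockSens f) ≤ ((Nat.sqrt (blockSens f) + 1 : ℕ) : ℝ) :=
          sqrt_le_succ_nat_sqrt _
        have e2 : Real.sqrt (blockSens f) ≤ ((blockSens f : ℕ) : ℝ) := by
          apply sqrt_le_of_nat_le_sq (by positivity)
          have h1 : (1:ℝ) ≤ (blockSens f : ℝ) := by exact_mod_cast hb
          nlinarith
        have hsk : Real.sqrt (blockSens f) ≤
            ((min (Nat.sqrt (blockSens f) + 1) (blockSens f) : ℕ) : ℝ) := by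
          rcases min_cases (Nat.sqrt (blockSens f) + 1) (blockSens f) with ⟨h, -⟩ | ⟨h, -⟩ <;>
            rw [h]
          · exact e1
          · exact e2
        have h2 : ((min (Nat.sqrt (blockSens f) + 1) (blockSens f) : ℕ) : ℝ) ≤
            (blockSens (restrictBF f ρ) : ℝ) := by exact_mod_cast hρ2
        linarith
  · -- certificate complexity part
    intro hc
    by_cases hcase : certC f ≤ sens f * sens f
    · obtain ⟨ρ, hρ1, -, hρ2⟩ := sens_condensation f
      refine ⟨ρ, ?_, ?_⟩
      · rw [hρ1]
        have h : (sens f : ℝ) ≤ (certC f : ℝ) := by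
          exact_mod_cast (sens_le_blockSens f).trans (blockSens_le_certC f)
        have hb' : (0:ℝ) ≤ (certC f : ℝ) := by positivity
        linarith
      · rw [one_mul]
        have h1 : Real.sqrt (certC f) ≤ (sens f : ℝ) :=
          sqrt_le_of_nat_le_sq (by positivity) (by exact_mod_cast hcase)
        have h2 : (sens f : ℝ) ≤ (certC (restrictBF f ρ) : ℝ) := by exact_mod_cast hρ2
        linarith
    · push_neg at hcase
      obtain ⟨ρ, hρ1, -, hρ2⟩ := block_condensation f
        (min_le_right (Nat.sqrt (certC f) + 1) (blockSens f))
      refine ⟨ρ, ?_, ?_⟩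
      · have hs_le : sens f ≤ Nat.sqrt (certC f) :=
          Nat.le_sqrt'.mpr (by rw [pow_two]; exact hcase.le)
        have hq1 : Nat.sqrt (certC f) * Nat.sqrt (certC f) ≤ certC f := by
          have h := Nat.sqrt_le' (certC f); rwa [pow_two] at h
        have hq2 : Nat.sqrt (certC f) ≤ certC f := Nat.sqrt_le_self (certC f)
        have hnat : unsetCard ρ ≤ 2 * certC f := by
          have h3 : min (Nat.sqrt (certC f) + 1) (blockSens f) * sens f ≤
              (Nat.sqrt (certC f) + 1) * Nat.sqrt (certC f) :=
            Nat.mul_le_mul (min_le_left _ _) hs_le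
          nlinarith [hρ1]
        calc (unsetCard ρ : ℝ) ≤ ((2 * certC f : ℕ) : ℝ) := by exact_mod_cast hnat
          _ = 2 * (certC f : ℝ) := by push_cast; ring
      · rw [one_mul]
        have hCle : (certC f : ℝ) ≤ (sens f : ℝ) * (blockSens f : ℝ) := by
          have h' : (certC f : ℝ) ≤ (blockSens f : ℝ) * (sens f : ℝ) := by
            exact_mod_cast certC_le_blockSens_mul_sens f
          linarith [mul_comm (blockSens f : ℝ) (sens f : ℝ)]
        have hrr : Real.sqrt (certC f) * Real.sqrt (certC f) = (certC f : ℝ) :=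
          Real.mul_self_sqrt (by positivity)
        have hrpos : 0 < Real.sqrt (certC f) := Real.sqrt_pos.mpr (by exact_mod_cast hc)
        have hsr : (sens f : ℝ) ≤ Real.sqrt (certC f) := by
          have h1 : (sens f : ℝ) * (sens f : ℝ) ≤ (certC f : ℝ) := by exact_mod_cast hcase.le
          nlinarith [(by positivity : (0:ℝ) ≤ (sens f : ℝ))]
        have hrb : Real.sqrt (certC f) ≤ (blockSens f : ℝ) := by
          nlinarith [(by positivity : (0:ℝ) ≤ (blockSens f : ℝ))]
        have e1 : Real.sqrt (certC f) ≤ ((Nat.sqrt (certC f) + 1 : ℕ) : ℝ) :=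
          sqrt_le_succ_nat_sqrt _
        have hsk : Real.sqrt (certC f) ≤
            ((min (Nat.sqrt (certC f) + 1) (blockSens f) : ℕ) : ℝ) := by
          rcases min_cases (Nat.sqrt (certC f) + 1) (blockSens f) with ⟨h, -⟩ | ⟨h, -⟩ <;>
            rw [h]
          · exact e1
          · exact hrb
        have h2 : ((min (Nat.sqrt (certC f) + 1) (blockSens f) : ℕ) : ℝ) ≤
            (certC (restrictBF f ρ) : ℝ) := by exact_mod_cast hρ2
        linarith
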